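/- arXiv:1501.00559 — 4 statements merged into one kernel-verified Lean document; each statement's English description precedes it below -/
import Mathlib

section
/- If a set {x_1,…,x_n} in the unit ball B_X of a Banach space X is ε-shattered by the dual unit ball B_{X*} (acting as linear functionals), then for every choice of signs γ_i ∈ {−1,+1} one has ε·n ≤ ‖∑_{i=1}^n γ_i x_i‖_X. -/
/-- If {x_1,…,x_n} in the unit ball of a real Banach space X is
ε-shattered by the dual unit ball (with witnesses α_i), then for every choice of
signs γ_i ∈ {−1,+1}, ε·n ≤ ‖∑ γ_i x_i‖. -/
theorem stmt_3 {X : Type*} [NormedAddCommGroup X] [NormedSpace ℝ X] [CompleteSpace X]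
    {n : ℕ} (ε : ℝ) (hε : 0 < ε) (x : Fin n → X) (hx : ∀ i, ‖x i‖ ≤ 1)
    (α : Fin n → ℝ)
    (hshatter : ∀ B : Finset (Fin n), ∃ f : StrongDual ℝ X, ‖f‖ ≤ 1 ∧
      ∀ i, (i ∈ B → f (x i) ≥ α i + ε) ∧ (i ∉ B → f (x i) < α i - ε)) :
    ∀ γ : Fin n → ℝ, (∀ i, γ i = 1 ∨ γ i = -1) →
      ε * n ≤ ‖∑ i, γ i • x i‖ := by
  intro γ hγ
  set B : Finset (Fin n) := Finset.univ.filter (fun i => γ i = 1) with hB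
  obtain ⟨f, hf, hfB⟩ := hshatter B
  obtain ⟨g, hg, hgB⟩ := hshatter Bᶜ
  set z : X := ∑ i, γ i • x i with hz
  have key : 2 * ε * n ≤ (f - g) z := by
    have hsum : (f - g) z = ∑ i, γ i * ((f - g) (x i)) := by
      simp [hz, map_sum, map_smul, smul_eq_mul]
    rw [hsum]
    have : ∀ i ∈ Finset.univ, 2 * ε ≤ γ i * ((f - g) (x i)) := by
      intro i _
      rcases hγ i with h1 | h1
      · have hiB : i ∈ B := by simp [hB, h1]
        have hf' := (hfB i).1 hiB
        have hg' := (hgB i).2 (by simpa using hiB)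
        simp only [h1, one_mul, ContinuousLinearMap.sub_apply]
        linarith
      · have hiB : i ∉ B := by norm_num [hB, h1]
        have hf' := (hfB i).2 hiB
        have hg' := (hgB i).1 (by simpa using hiB)
        simp only [h1, ContinuousLinearMap.sub_apply]
        nlinarith
    calc 2 * ε * n = ∑ _i : Fin n, 2 * ε := by simp [mul_comm]
    _ ≤ _ := Finset.sum_le_sum this
  have hbound : (f - g) z ≤ 2 * ‖z‖ := by
    calc (f - g) z ≤ ‖(f - g) z‖ := le_abs_self _
    _ ≤ ‖f - g‖ * ‖z‖ := (f - g).le_opNorm z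
    _ ≤ 2 * ‖z‖ := by
        have : ‖f - g‖ ≤ 2 := by
          calc ‖f - g‖ ≤ ‖f‖ + ‖g‖ := norm_sub_le _ _
          _ ≤ 2 := by linarith
        exact mul_le_mul_of_nonneg_right this (norm_nonneg z)
  nlinarith
end

section
/- The fat-shattering dimension at scale ε of the class of linear functionals given by the unit ball of Schatten-∞ class acting on the unit ball of Schatten-1 class of d×d Hermitian matrices is at most C·d/ε², for an absolute constant C and all 0 < ε < 1/2. -/
/-- Trace norm (Schatten 1-norm) of a Hermitian matrix. -/
noncomputable def traceNorm {d : ℕ} (A : Matrix (Fin d) (Fin d) ℂ) : ℝ :=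
  if hA : A.IsHermitian then ∑ i, |hA.eigenvalues i| else 0

/-- Operator norm (Schatten ∞-norm) of a Hermitian matrix. -/
noncomputable def opNorm {d : ℕ} (A : Matrix (Fin d) (Fin d) ℂ) : ℝ :=
  if hA : A.IsHermitian then ⨆ i, |hA.eigenvalues i| else 0

open Matrix

lemma abs_eig_le_opNorm {d : ℕ} {E : Matrix (Fin d) (Fin d) ℂ} (hE : E.IsHermitian) (i : Fin d) :
    |hE.eigenvalues i| ≤ opNorm E := by
  rw [opNorm, dif_pos hE]
  exact le_ciSup (f := fun i => |hE.eigenvalues i|) (Set.Finite.bddAbove (Set.finite_range _)) i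

lemma col_normSq {d : ℕ} {V : Matrix (Fin d) (Fin d) ℂ}
    (hV : V ∈ Matrix.unitaryGroup (Fin d) ℂ) (j : Fin d) :
    ∑ i, Complex.normSq (V i j) = 1 := by
  have h1 : (star V * V) j j = 1 := by rw [hV.1]; simp [Matrix.one_apply]
  have h2 : (star V * V) j j = ∑ i, (Complex.normSq (V i j) : ℂ) := by
    simp [Matrix.mul_apply, Matrix.star_apply, Complex.normSq_eq_conj_mul_self]
  have := h1.symm.trans h2
  have : ((1 : ℂ)).re = (∑ i, (Complex.normSq (V i j) : ℂ)).re := congrArg Complex.re this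
  simpa using this.symm

lemma diag_re_bound {d : ℕ} {E : Matrix (Fin d) (Fin d) ℂ} (hE : E.IsHermitian)
    {V : Matrix (Fin d) (Fin d) ℂ} (hV : V ∈ Matrix.unitaryGroup (Fin d) ℂ) (j : Fin d) :
    |((star V * E * V) j j).re| ≤ opNorm E := by
  set W := (hE.eigenvectorUnitary : Matrix (Fin d) (Fin d) ℂ) with hWdef
  have hW : W ∈ Matrix.unitaryGroup (Fin d) ℂ := hE.eigenvectorUnitary.2
  set Q := star W * V with hQdef
  have hQ : Q ∈ Matrix.unitaryGroup (Fin d) ℂ := by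
    constructor
    · show star Q * Q = 1
      have : star Q = star V * W := by simp [hQdef]
      rw [this, hQdef, mul_assoc, ← mul_assoc W, hW.2, one_mul, hV.1]
    · show Q * star Q = 1
      have : star Q = star V * W := by simp [hQdef]
      rw [this, hQdef, mul_assoc, ← mul_assoc V, hV.2, one_mul, hW.1]
  have key : star V * E * V = star Q * diagonal (RCLike.ofReal ∘ hE.eigenvalues) * Q := by
    have hsQ : star Q = star V * W := by simp [hQdef]
    conv_lhs => rw [hE.spectral_theorem]; simp only [Unitary.conjStarAlgAut_apply, Unitary.coe_star]
    rw [hsQ, hQdef]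
    noncomm_ring
  rw [key]
  have entry : (star Q * diagonal ((RCLike.ofReal ∘ hE.eigenvalues : Fin d → ℂ)) * Q) j j
      = ∑ i, (hE.eigenvalues i : ℂ) * (starRingEnd ℂ (Q i j) * Q i j) := by
    simp [Matrix.mul_apply, Matrix.diagonal, Matrix.star_apply, Finset.sum_mul]
    congr 1; ext i; ring
  rw [entry]
  have hre : (∑ i, (hE.eigenvalues i : ℂ) * (starRingEnd ℂ (Q i j) * Q i j)).re
      = ∑ i, hE.eigenvalues i * Complex.normSq (Q i j) := by
    rw [Complex.re_sum]
    congr 1; ext i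
    rw [← Complex.normSq_eq_conj_mul_self]
    simp
  rw [hre]
  calc |∑ i, hE.eigenvalues i * Complex.normSq (Q i j)|
      ≤ ∑ i, |hE.eigenvalues i * Complex.normSq (Q i j)| := Finset.abs_sum_le_sum_abs _ _
    _ ≤ ∑ i, opNorm E * Complex.normSq (Q i j) := by
        apply Finset.sum_le_sum
        intro i _
        rw [abs_mul, abs_of_nonneg (Complex.normSq_nonneg _)]
        exact mul_le_mul_of_nonneg_right (abs_eig_le_opNorm hE i) (Complex.normSq_nonneg _)
    _ = opNorm E := by rw [← Finset.mul_sum, col_normSq hQ, mul_one]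


lemma re_trace_mul_le {d : ℕ} {E M : Matrix (Fin d) (Fin d) ℂ}
    (hE : E.IsHermitian) (hM : M.IsHermitian) :
    |(Matrix.trace (E * M)).re| ≤ opNorm E * traceNorm M := by
  set U := (hM.eigenvectorUnitary : Matrix (Fin d) (Fin d) ℂ) with hUdef
  have hU : U ∈ Matrix.unitaryGroup (Fin d) ℂ := hM.eigenvectorUnitary.2
  set c : Fin d → ℂ := (RCLike.ofReal ∘ hM.eigenvalues : Fin d → ℂ) with hcdef
  have h1 : Matrix.trace (E * M) = ∑ j, (star U * E * U) j j * c j := by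
    conv_lhs => rw [hM.spectral_theorem]; simp only [Unitary.conjStarAlgAut_apply, Unitary.coe_star]
    rw [show E * (U * diagonal c * star U) = (E * U * diagonal c) * star U by noncomm_ring,
      Matrix.trace_mul_comm,
      show star U * (E * U * diagonal c) = (star U * E * U) * diagonal c by noncomm_ring]
    simp [Matrix.trace, Matrix.diag, Matrix.mul_apply, Matrix.diagonal]
  rw [h1]
  have h2 : (∑ j, (star U * E * U) j j * c j).re
      = ∑ j, ((star U * E * U) j j).re * hM.eigenvalues j := by
    rw [Complex.re_sum]
    congr 1; ext j
    simp [hcdef, Complex.mul_re]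
  rw [h2]
  calc |∑ j, ((star U * E * U) j j).re * hM.eigenvalues j|
      ≤ ∑ j, |((star U * E * U) j j).re * hM.eigenvalues j| := Finset.abs_sum_le_sum_abs _ _
    _ ≤ ∑ j, opNorm E * |hM.eigenvalues j| := by
        apply Finset.sum_le_sum
        intro j _
        rw [abs_mul]
        exact mul_le_mul_of_nonneg_right (diag_re_bound hE hU j) (abs_nonneg _)
    _ = opNorm E * traceNorm M := by rw [← Finset.mul_sum, traceNorm, dif_pos hM]

lemma trace_sq_eq {d : ℕ} {M : Matrix (Fin d) (Fin d) ℂ} (hM : M.IsHermitian) :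
    (Matrix.trace (M * M)).re = ∑ i, hM.eigenvalues i ^ 2 := by
  set U := (hM.eigenvectorUnitary : Matrix (Fin d) (Fin d) ℂ) with hUdef
  have hU : U ∈ Matrix.unitaryGroup (Fin d) ℂ := hM.eigenvectorUnitary.2
  set c : Fin d → ℂ := (RCLike.ofReal ∘ hM.eigenvalues : Fin d → ℂ) with hcdef
  have h1 : M * M = U * (diagonal c * diagonal c) * star U := by
    conv_lhs => rw [hM.spectral_theorem]; simp only [Unitary.conjStarAlgAut_apply, Unitary.coe_star]
    rw [show U * diagonal c * star U * (U * diagonal c * star U)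
        = U * diagonal c * (star U * U) * diagonal c * star U by noncomm_ring, hU.1]
    noncomm_ring
  rw [h1, Matrix.trace_mul_cycle, ← mul_assoc, hU.1, one_mul, Matrix.diagonal_mul_diagonal,
    Matrix.trace_diagonal]
  rw [Complex.re_sum]
  congr 1; ext i
  simp [hcdef, ← Complex.ofReal_mul, sq]

noncomputable def sgn {n : ℕ} (γ : Fin n → Bool) (i : Fin n) : ℝ := if γ i then 1 else -1

lemma sgn_sq {n : ℕ} (γ : Fin n → Bool) (i : Fin n) : sgn γ i * sgn γ i = 1 := by
  unfold sgn; split <;> norm_num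

lemma sum_sgn_mul {n : ℕ} (i j : Fin n) :
    ∑ γ : Fin n → Bool, sgn γ i * sgn γ j = if i = j then (2:ℝ)^n else 0 := by
  split
  · next h =>
    subst h
    rw [Finset.sum_congr rfl (fun γ _ => sgn_sq γ i)]
    simp [Finset.card_univ]
  · next h =>
    apply Finset.sum_ninvolution (fun γ => Function.update γ j (!(γ j)))
    · intro γ
      have h1 : sgn (Function.update γ j (!(γ j))) i = sgn γ i := by
        unfold sgn; rw [Function.update_of_ne (fun hh : i = j => h hh)]
      have h2 : sgn (Function.update γ j (!(γ j))) j = - sgn γ j := by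
        unfold sgn; rw [Function.update_self]; cases γ j <;> norm_num
      rw [h1, h2]; ring
    · intro γ hne
      intro hcontra
      have := congrFun hcontra j
      rw [Function.update_self] at this
      cases hγ : γ j <;> rw [hγ] at this <;> simp at this
    · intro γ; exact Finset.mem_univ _
    · intro γ
      ext k
      by_cases hk : k = j
      · subst hk; simp
      · simp [Function.update_of_ne hk]

lemma herm_comb {d n : ℕ} (x : Fin n → Matrix (Fin d) (Fin d) ℂ) (hx : ∀ i, (x i).IsHermitian)
    (c : Fin n → ℝ) : (∑ i, ((c i : ℂ) • x i)).IsHermitian := by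
  unfold Matrix.IsHermitian
  rw [Matrix.conjTranspose_sum]
  exact Finset.sum_congr rfl fun i _ => by
    rw [Matrix.conjTranspose_smul, Complex.star_def, Complex.conj_ofReal, (hx i).eq]

lemma trace_comb_sq {d n : ℕ} (x : Fin n → Matrix (Fin d) (Fin d) ℂ) (c : Fin n → ℝ) :
    (Matrix.trace ((∑ i, ((c i : ℂ) • x i)) * (∑ i, ((c i : ℂ) • x i)))).re
      = ∑ i, ∑ j, c i * c j * (Matrix.trace (x i * x j)).re := by
  rw [Finset.sum_mul_sum]
  rw [Matrix.trace_sum]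
  rw [Complex.re_sum]
  congr 1; ext i
  rw [Matrix.trace_sum, Complex.re_sum]
  congr 1; ext j
  rw [Matrix.smul_mul, Matrix.mul_smul, smul_smul, Matrix.trace_smul,
    smul_eq_mul, ← Complex.ofReal_mul, Complex.re_ofReal_mul]

lemma avg_bound {d n : ℕ} (x : Fin n → Matrix (Fin d) (Fin d) ℂ) :
    ∑ γ : Fin n → Bool, (Matrix.trace ((∑ i, ((sgn γ i : ℂ) • x i)) * (∑ i, ((sgn γ i : ℂ) • x i)))).re
      = (2:ℝ)^n * ∑ i, (Matrix.trace (x i * x i)).re := by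
  have h1 : ∀ γ : Fin n → Bool,
      (Matrix.trace ((∑ i, ((sgn γ i : ℂ) • x i)) * (∑ i, ((sgn γ i : ℂ) • x i)))).re
        = ∑ i, ∑ j, sgn γ i * sgn γ j * (Matrix.trace (x i * x j)).re :=
    fun γ => trace_comb_sq x (sgn γ)
  rw [Finset.sum_congr rfl (fun γ _ => h1 γ)]
  rw [Finset.sum_comm]
  rw [Finset.sum_congr rfl (fun i _ => Finset.sum_comm)]
  have h2 : ∀ i j : Fin n, ∑ γ : Fin n → Bool, sgn γ i * sgn γ j * (Matrix.trace (x i * x j)).re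
      = (if i = j then (2:ℝ)^n else 0) * (Matrix.trace (x i * x j)).re := by
    intro i j
    rw [← Finset.sum_mul, sum_sgn_mul]
  rw [Finset.sum_congr rfl (fun i _ => Finset.sum_congr rfl (fun j _ => h2 i j))]
  rw [Finset.mul_sum]
  congr 1; ext i
  rw [Finset.sum_eq_single i]
  · simp
  · intro j _ hj; simp [Ne.symm hj]
  · intro h; exact absurd (Finset.mem_univ i) h

lemma traceNorm_nonneg {d : ℕ} (A : Matrix (Fin d) (Fin d) ℂ) : 0 ≤ traceNorm A := by
  unfold traceNorm
  split
  · exact Finset.sum_nonneg fun i _ => abs_nonneg _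
  · exact le_rfl

/-- There is an absolute constant C such that for all 0 < ε < 1/2,
any set of n points in the Schatten-1 unit ball of d×d Hermitian matrices that is
ε-shattered (with real witnesses) by the linear functionals x ↦ Tr(Ex) indexed by
the Schatten-∞ unit ball satisfies n ≤ C·d/ε². -/
theorem stmt_5 :
    ∃ C : ℝ, 0 < C ∧ ∀ (d n : ℕ) (ε : ℝ), 0 < ε → ε < 1 / 2 →
      ∀ (x : Fin n → Matrix (Fin d) (Fin d) ℂ) (α : Fin n → ℝ),
        (∀ i, (x i).IsHermitian) → (∀ i, traceNorm (x i) ≤ 1) →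
        (∀ B : Finset (Fin n), ∃ E : Matrix (Fin d) (Fin d) ℂ,
          E.IsHermitian ∧ opNorm E ≤ 1 ∧
          ∀ i, (i ∈ B → (Matrix.trace (E * x i)).re ≥ α i + ε) ∧
               (i ∉ B → (Matrix.trace (E * x i)).re < α i - ε)) →
        (n : ℝ) ≤ C * d / ε ^ 2 := by
  refine ⟨1, one_pos, ?_⟩
  intro d n ε hε hε2 x α hherm htrace hshatter
  rcases Nat.eq_zero_or_pos n with hn | hn
  · subst hn
    simp only [Nat.cast_zero]
    positivity
  set M : (Fin n → Bool) → Matrix (Fin d) (Fin d) ℂ :=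
    fun γ => ∑ i, ((sgn γ i : ℂ) • x i) with hMdef
  have hMherm : ∀ γ, (M γ).IsHermitian := fun γ => herm_comb x hherm (sgn γ)
  -- lower bound on trace norm
  have main : ∀ (δ : Fin n → Bool), ∃ E : Matrix (Fin d) (Fin d) ℂ, E.IsHermitian ∧ opNorm E ≤ 1 ∧
      (n:ℝ)*ε + ∑ i, sgn δ i * α i ≤ (Matrix.trace (E * (M δ))).re := by
    intro δ
    obtain ⟨E, hE1, hE2, hE3⟩ := hshatter (Finset.univ.filter (fun i => δ i = true))
    refine ⟨E, hE1, hE2, ?_⟩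
    have hper : ∀ i, ε + sgn δ i * α i ≤ sgn δ i * (Matrix.trace (E * x i)).re := by
      intro i
      rcases hδ : δ i with _|_
      · have h := (hE3 i).2 (by simp [hδ])
        have hs : sgn δ i = -1 := by simp [sgn, hδ]
        rw [hs]; nlinarith
      · have h := (hE3 i).1 (by simp [hδ])
        have hs : sgn δ i = 1 := by simp [sgn, hδ]
        rw [hs]; nlinarith
    have hsum := Finset.sum_le_sum (fun i (_ : i ∈ Finset.univ) => hper i)
    have htreq : ∑ i, sgn δ i * (Matrix.trace (E * x i)).re = (Matrix.trace (E * M δ)).re := by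
      have hexp : E * M δ = ∑ i, ((sgn δ i : ℂ) • (E * x i)) := by
        rw [hMdef, Finset.mul_sum]
        congr 1; ext i; rw [Matrix.mul_smul]
      rw [hexp, Matrix.trace_sum, Complex.re_sum]
      congr 1; ext i
      rw [Matrix.trace_smul, smul_eq_mul, Complex.re_ofReal_mul]
    rw [Finset.sum_add_distrib, htreq] at hsum
    have hconst : ∑ _i : Fin n, ε = (n:ℝ) * ε := by
      rw [Finset.sum_const, Finset.card_univ, Fintype.card_fin, nsmul_eq_mul]
    linarith [hsum, hconst]
  have key1 : ∀ γ : Fin n → Bool, (n:ℝ) * ε ≤ traceNorm (M γ) := by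
    intro γ
    obtain ⟨E, hE1, hE2, hEineq⟩ := main γ
    obtain ⟨E', hE1', hE2', hEineq'⟩ := main (fun i => !(γ i))
    have hsg : ∀ k, sgn (fun m => !(γ m)) k = - sgn γ k := by
      intro k; cases hγ : γ k <;> simp [sgn, hγ]
    have hMneg : M (fun i => !(γ i)) = - M γ := by
      rw [hMdef]
      simp only
      rw [← Finset.sum_neg_distrib]
      refine Finset.sum_congr rfl fun k _ => ?_
      rw [hsg k]; push_cast; rw [neg_smul]
    have hαneg : ∑ i, sgn (fun m => !(γ m)) i * α i = - ∑ i, sgn γ i * α i := by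
      rw [← Finset.sum_neg_distrib]
      refine Finset.sum_congr rfl fun k _ => ?_
      rw [hsg k]; ring
    rw [hMneg, hαneg, Matrix.mul_neg, Matrix.trace_neg, Complex.neg_re] at hEineq'
    have hb1 : (Matrix.trace (E * M γ)).re ≤ traceNorm (M γ) := by
      have := re_trace_mul_le hE1 (hMherm γ)
      have h2 := abs_le.mp this
      calc (Matrix.trace (E * M γ)).re ≤ opNorm E * traceNorm (M γ) := by
            exact le_trans (le_abs_self _) this
        _ ≤ 1 * traceNorm (M γ) :=
            mul_le_mul_of_nonneg_right hE2 (traceNorm_nonneg _)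
        _ = traceNorm (M γ) := one_mul _
    have hb2 : -(Matrix.trace (E' * M γ)).re ≤ traceNorm (M γ) := by
      have := re_trace_mul_le hE1' (hMherm γ)
      calc -(Matrix.trace (E' * M γ)).re ≤ opNorm E' * traceNorm (M γ) :=
            le_trans (neg_le_abs _) this
        _ ≤ 1 * traceNorm (M γ) :=
            mul_le_mul_of_nonneg_right hE2' (traceNorm_nonneg _)
        _ = traceNorm (M γ) := one_mul _
    linarith
  -- average Frobenius bound
  have hxsq : ∀ i, (Matrix.trace (x i * x i)).re ≤ 1 := by
    intro i
    rw [trace_sq_eq (hherm i)]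
    have h1 : ∑ j, (hherm i).eigenvalues j ^ 2 ≤ (∑ j, |(hherm i).eigenvalues j|) ^ 2 := by
      have := Finset.sum_sq_le_sq_sum_of_nonneg
        (f := fun j => |(hherm i).eigenvalues j|) (s := Finset.univ)
        (fun j _ => abs_nonneg _)
      simpa [sq_abs] using this
    have h2 : traceNorm (x i) = ∑ j, |(hherm i).eigenvalues j| := by
      rw [traceNorm, dif_pos (hherm i)]
    nlinarith [traceNorm_nonneg (x i), htrace i, h1, h2]
  have havg : ∑ γ : Fin n → Bool, (Matrix.trace (M γ * M γ)).re ≤ (2:ℝ)^n * n := by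
    rw [hMdef]
    rw [avg_bound x]
    have : ∑ i, (Matrix.trace (x i * x i)).re ≤ (n:ℝ) := by
      calc ∑ i, (Matrix.trace (x i * x i)).re ≤ ∑ _i : Fin n, (1:ℝ) :=
            Finset.sum_le_sum fun i _ => hxsq i
        _ = n := by simp
    have h2 : (0:ℝ) < 2^n := by positivity
    nlinarith
  obtain ⟨γ, _, hγ⟩ := Finset.exists_le_of_sum_le (s := (Finset.univ : Finset (Fin n → Bool)))
    (f := fun γ => (Matrix.trace (M γ * M γ)).re) (g := fun _ => (n:ℝ))
    Finset.univ_nonempty (by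
      rw [Finset.sum_const, Finset.card_univ]
      simpa [nsmul_eq_mul] using havg)
  -- Cauchy-Schwarz: traceNorm ≤ sqrt d * sqrt (Frobenius²)
  have hcs : (traceNorm (M γ))^2 ≤ (d:ℝ) * (Matrix.trace (M γ * M γ)).re := by
    rw [traceNorm, dif_pos (hMherm γ), trace_sq_eq (hMherm γ)]
    have := sq_sum_le_card_mul_sum_sq (s := (Finset.univ : Finset (Fin d)))
      (f := fun j => |(hMherm γ).eigenvalues j|)
    simpa [sq_abs, Finset.card_univ] using this
  -- combine
  have hfinal : ((n:ℝ) * ε)^2 ≤ (d:ℝ) * n := by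
    have h1 : ((n:ℝ)*ε)^2 ≤ (traceNorm (M γ))^2 := by
      have := key1 γ
      nlinarith [key1 γ, mul_nonneg (Nat.cast_nonneg n) hε.le]
    have h2 : (d:ℝ) * (Matrix.trace (M γ * M γ)).re ≤ (d:ℝ) * n :=
      mul_le_mul_of_nonneg_left hγ (Nat.cast_nonneg d)
    linarith
  have hnpos : (0:ℝ) < n := by exact_mod_cast hn
  rw [one_mul, le_div_iff₀ (by positivity)]
  nlinarith [hfinal]
end

section
/- For the class F of linear functionals ρ ↦ Tr(Eρ) with E ranging over the effect space E(ℂ^d), acting on quantum states, the level fat-shattering dimension (where all witnesses equal 1/2) equals the fat-shattering dimension: fat_F(ε) = fat̲_F(ε) for all ε > 0. -/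
open scoped ComplexOrder

private lemma psd_add {d : ℕ} {A B : Matrix (Fin d) (Fin d) ℂ}
    (hA : A.PosSemidef) (hB : B.PosSemidef) : (A + B).PosSemidef := by
  refine ⟨hA.1.add hB.1, fun x => ?_⟩
  have := add_nonneg (hA.2 x) (hB.2 x)
  simpa [mul_add, add_mul, Finsupp.sum_add] using this

private lemma psd_smul {d : ℕ} {A : Matrix (Fin d) (Fin d) ℂ}
    (hA : A.PosSemidef) : ((2:ℂ)⁻¹ • A).PosSemidef := by
  have h2 : (0:ℂ) ≤ (2:ℂ)⁻¹ := by
    rw [Complex.le_def]; norm_num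
  refine ⟨?_, fun x => ?_⟩
  · unfold Matrix.IsHermitian
    rw [Matrix.conjTranspose_smul, hA.1]
    congr 1
    simp [Complex.star_def, Complex.conj_eq_iff_im]
  · have := mul_nonneg h2 (hA.2 x)
    simpa [Finsupp.mul_sum, mul_assoc, mul_left_comm] using this

/-- For the class F = {ρ ↦ Tr(Eρ) : E an effect, 0 ≼ E ≼ I} on
quantum states, the fat-shattering dimension with arbitrary real witnesses equals
the level fat-shattering dimension with all witnesses equal to 1/2: for every
ε > 0 and every n, there is an ε-shattered set of n states iff there is one
ε-shattered with all witnesses 1/2. -/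
theorem stmt_11 (d n : ℕ) (ε : ℝ) (hε : 0 < ε) :
    (∃ (x : Fin n → Matrix (Fin d) (Fin d) ℂ) (α : Fin n → ℝ),
      (∀ i, (x i).PosSemidef) ∧ (∀ i, Matrix.trace (x i) = 1) ∧
      ∀ B : Finset (Fin n), ∃ E : Matrix (Fin d) (Fin d) ℂ,
        E.PosSemidef ∧ (1 - E).PosSemidef ∧
        ∀ i, (i ∈ B → (Matrix.trace (E * x i)).re ≥ α i + ε) ∧
             (i ∉ B → (Matrix.trace (E * x i)).re < α i - ε)) ↔
    (∃ x : Fin n → Matrix (Fin d) (Fin d) ℂ,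
      (∀ i, (x i).PosSemidef) ∧ (∀ i, Matrix.trace (x i) = 1) ∧
      ∀ B : Finset (Fin n), ∃ E : Matrix (Fin d) (Fin d) ℂ,
        E.PosSemidef ∧ (1 - E).PosSemidef ∧
        ∀ i, (i ∈ B → (Matrix.trace (E * x i)).re ≥ 1 / 2 + ε) ∧
             (i ∉ B → (Matrix.trace (E * x i)).re < 1 / 2 - ε)) := by
  constructor
  · rintro ⟨x, α, hpsd, htr, hsh⟩
    refine ⟨x, hpsd, htr, fun B => ?_⟩
    obtain ⟨E₁, hE₁, hE₁', h1⟩ := hsh B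
    obtain ⟨E₂, hE₂, hE₂', h2⟩ := hsh Bᶜ
    refine ⟨(2:ℂ)⁻¹ • (E₁ + (1 - E₂)), psd_smul (psd_add hE₁ hE₂'), ?_, fun i => ?_⟩
    · have heq : 1 - (2:ℂ)⁻¹ • (E₁ + (1 - E₂)) = (2:ℂ)⁻¹ • ((1 - E₁) + E₂) := by
        module
      rw [heq]
      exact psd_smul (psd_add hE₁' hE₂)
    · have htrace : (Matrix.trace (((2:ℂ)⁻¹ • (E₁ + (1 - E₂))) * x i)).re
          = 2⁻¹ * ((Matrix.trace (E₁ * x i)).re + 1 - (Matrix.trace (E₂ * x i)).re) := by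
        rw [Matrix.smul_mul, Matrix.trace_smul, add_mul, sub_mul, one_mul,
          Matrix.trace_add, Matrix.trace_sub]
        rw [htr i]
        simp [Complex.mul_re, Complex.add_re, Complex.sub_re]
        ring
      constructor
      · intro hi
        have hA := (h1 i).1 hi
        have hB := (h2 i).2 (by simpa using hi)
        rw [htrace]
        nlinarith
      · intro hi
        have hA := (h1 i).2 hi
        have hB := (h2 i).1 (by simpa using hi)
        rw [htrace]
        nlinarith
  · rintro ⟨x, hpsd, htr, hsh⟩
    exact ⟨x, fun _ => 1/2, hpsd, htr, hsh⟩
end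

section
/- For any 1/2 < p ≤ 1 and positive integer m, there is no (2^{2m}, m, p) quantum random access code; equivalently, no collection {ρ_y} of 2^m-dimensional density matrices indexed by y ∈ {0,1}^{2^{2m}} together with two-outcome POVMs E^1,…,E^{2^{2m}} can satisfy Tr(E^i ρ_y) ≥ p when y_i = 1 and Tr(E^i ρ_y) ≤ 1 − p when y_i = 0 for all y and i. -/
open scoped ComplexOrder

/-- For 1/2 < p ≤ 1 and any positive integer m, there is no
(2^{2m}, m, p) quantum random access code: no family ρ_y of density matrices on
ℂ^{2^m}, indexed by bit strings y of length 2^{2m}, together with effects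
E^1,…,E^{2^{2m}} can satisfy Tr(E^i ρ_y) ≥ p when y_i = 1 and
Tr(E^i ρ_y) ≤ 1 − p when y_i = 0, for all y and i. -/
theorem stmt_18 (m : ℕ) (hm : 0 < m) (p : ℝ) (hp : 1 / 2 < p) (hp1 : p ≤ 1) :
    ¬ ∃ (ρ : (Fin (2 ^ (2 * m)) → Bool) → Matrix (Fin (2 ^ m)) (Fin (2 ^ m)) ℂ)
        (E : Fin (2 ^ (2 * m)) → Matrix (Fin (2 ^ m)) (Fin (2 ^ m)) ℂ),
      (∀ y, (ρ y).PosSemidef ∧ Matrix.trace (ρ y) = 1) ∧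
      (∀ i, (E i).PosSemidef ∧ (1 - E i).PosSemidef) ∧
      (∀ y i, (y i = true → (Matrix.trace (E i * ρ y)).re ≥ p) ∧
              (y i = false → (Matrix.trace (E i * ρ y)).re ≤ 1 - p)) := by
  rintro ⟨ρ, E, hρ, hE, hprob⟩
  have hd : 0 < 2 ^ m := Nat.pow_pos (by norm_num)
  -- the traces Tr(E i * ρ y) are real numbers
  have hreal : ∀ y i, (Matrix.trace (E i * ρ y)).im = 0 := by
    intro y i
    have h1 : (E i * ρ y).conjTranspose = ρ y * E i := by
      rw [Matrix.conjTranspose_mul, (hρ y).1.isHermitian, (hE i).1.isHermitian]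
    have h2 : star (Matrix.trace (E i * ρ y)) = Matrix.trace (E i * ρ y) := by
      rw [← Matrix.trace_conjTranspose, h1, Matrix.trace_mul_comm]
    exact Complex.conj_eq_iff_im.mp h2
  -- the linear map ρ ↦ (Tr(E i * ρ))_i
  let L : Matrix (Fin (2 ^ m)) (Fin (2 ^ m)) ℂ →ₗ[ℂ] (Fin (2 ^ (2 * m)) → ℂ) :=
    { toFun := fun M i => Matrix.trace (E i * M)
      map_add' := fun M N => funext fun i => by simp [Matrix.mul_add]
      map_smul' := fun z M => funext fun i => by simp [Matrix.mul_smul] }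
  have hL : ∀ M i, L M i = Matrix.trace (E i * M) := fun _ _ => rfl
  let T := Matrix.traceLinearMap (Fin (2 ^ m)) ℂ ℂ
  have hT : ∀ M, T M = Matrix.trace M := fun _ => rfl
  have hTsurj : LinearMap.range T = ⊤ := by
    rw [LinearMap.range_eq_top]
    intro z
    refine ⟨Matrix.diagonal (Pi.single ⟨0, hd⟩ z), ?_⟩
    rw [hT, Matrix.trace_diagonal]
    simp
  have hn : Module.finrank ℂ (Matrix (Fin (2 ^ m)) (Fin (2 ^ m)) ℂ) = 2 ^ (2 * m) := by
    rw [Module.finrank_matrix]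
    simp [← pow_add, two_mul]
  have hKrank : Module.finrank ℂ (LinearMap.ker T) + 1 = 2 ^ (2 * m) := by
    have h := LinearMap.finrank_range_add_finrank_ker T
    rw [hTsurj, finrank_top, Module.finrank_self, hn] at h
    omega
  -- the image of the traceless matrices under L is a proper subspace of ℂ^n
  set W := (LinearMap.ker T).map L with hWdef
  have hWlt : W < ⊤ := by
    apply Submodule.lt_top_of_finrank_lt_finrank
    have h1 : Module.finrank ℂ W ≤ Module.finrank ℂ (LinearMap.ker T) :=
      Submodule.finrank_map_le L _
    have h2 : Module.finrank ℂ (Fin (2 ^ (2 * m)) → ℂ) = 2 ^ (2 * m) := by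
      simp [Module.finrank_pi]
    have h3 : 0 < 2 ^ (2 * m) := Nat.pow_pos (by norm_num)
    omega
  obtain ⟨f, hf0, hfW⟩ := W.exists_dual_map_eq_bot_of_lt_top hWlt inferInstance
  have hfW' : ∀ w ∈ W, f w = 0 := by
    intro w hw
    have : f w ∈ W.map f := Submodule.mem_map_of_mem hw
    rwa [hfW, Submodule.mem_bot] at this
  -- coordinates of f
  set c : Fin (2 ^ (2 * m)) → ℂ := fun i => f (Pi.single i (1 : ℂ)) with hc
  have hfexpand : ∀ v : Fin (2 ^ (2 * m)) → ℂ, f v = ∑ i, v i * c i := by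
    intro v
    have hv : v = ∑ i, v i • (Pi.single i 1 : Fin (2 ^ (2 * m)) → ℂ) := by
      funext j
      simp [Finset.sum_apply, Pi.single_apply]
    calc f v = f (∑ i, v i • (Pi.single i 1 : Fin (2 ^ (2 * m)) → ℂ)) := by rw [← hv]
    _ = ∑ i, v i * c i := by
        rw [map_sum]
        exact Finset.sum_congr rfl fun i _ => by rw [map_smul, smul_eq_mul, hc]
  have hcne : ∃ j, c j ≠ 0 := by
    by_contra h
    push_neg at h
    apply hf0
    ext v
    simp [hfexpand, h]
  -- f is constant on the L (ρ y)
  have hconstC : ∀ y y', f (L (ρ y)) = f (L (ρ y')) := by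
    intro y y'
    have hker : ρ y - ρ y' ∈ LinearMap.ker T := by
      rw [LinearMap.mem_ker, hT, Matrix.trace_sub, (hρ y).2, (hρ y').2, sub_self]
    have hmem : L (ρ y) - L (ρ y') ∈ W := by
      rw [← map_sub]
      exact Submodule.mem_map_of_mem hker
    have := hfW' _ hmem
    rw [map_sub] at this
    exact sub_eq_zero.mp this
  -- real and imaginary parts of f (L (ρ y))
  have hre : ∀ y, (f (L (ρ y))).re = ∑ i, (Matrix.trace (E i * ρ y)).re * (c i).re := by
    intro y
    rw [hfexpand, Complex.re_sum]
    refine Finset.sum_congr rfl fun i _ => ?_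
    rw [Complex.mul_re, hL, hreal y i]
    ring
  have him : ∀ y, (f (L (ρ y))).im = ∑ i, (Matrix.trace (E i * ρ y)).re * (c i).im := by
    intro y
    rw [hfexpand, Complex.im_sum]
    refine Finset.sum_congr rfl fun i _ => ?_
    rw [Complex.mul_im, hL, hreal y i]
    ring
  obtain ⟨j, hj⟩ := hcne
  -- extract a nonzero real functional constant on the probability vectors
  obtain ⟨r, hrj, hconst⟩ :
      ∃ r : Fin (2 ^ (2 * m)) → ℝ, r j ≠ 0 ∧ ∀ y y',
        ∑ i, (Matrix.trace (E i * ρ y)).re * r i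
          = ∑ i, (Matrix.trace (E i * ρ y')).re * r i := by
    have hcases : (c j).re ≠ 0 ∨ (c j).im ≠ 0 := by
      by_contra h
      push_neg at h
      exact hj (by apply Complex.ext <;> simp [h.1, h.2])
    rcases hcases with h0 | h0
    · exact ⟨fun i => (c i).re, h0, fun y y' => by
        rw [← hre y, ← hre y', hconstC y y']⟩
    · exact ⟨fun i => (c i).im, h0, fun y y' => by
        rw [← him y, ← him y', hconstC y y']⟩
  -- the two extremal sign patterns
  set yp : Fin (2 ^ (2 * m)) → Bool := fun i => decide (0 < r i) with hyp
  set yn : Fin (2 ^ (2 * m)) → Bool := fun i => decide (r i < 0) with hyn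
  have h1p : 1 - p < p := by linarith
  have key : ∀ i, (Matrix.trace (E i * ρ yn)).re * r i
      ≤ (Matrix.trace (E i * ρ yp)).re * r i ∧
      (r i ≠ 0 → (Matrix.trace (E i * ρ yn)).re * r i
        < (Matrix.trace (E i * ρ yp)).re * r i) := by
    intro i
    rcases lt_trichotomy (r i) 0 with h | h | h
    · have hxp : (Matrix.trace (E i * ρ yp)).re ≤ 1 - p :=
        (hprob yp i).2 (by rw [hyp]; exact decide_eq_false (asymm h))
      have hxn : p ≤ (Matrix.trace (E i * ρ yn)).re :=
        (hprob yn i).1 (by rw [hyn]; exact decide_eq_true h)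
      have hlt : (Matrix.trace (E i * ρ yp)).re < (Matrix.trace (E i * ρ yn)).re := by
        linarith
      exact ⟨(mul_lt_mul_of_neg_right hlt h).le, fun _ => mul_lt_mul_of_neg_right hlt h⟩
    · simp [h]
    · have hxp : p ≤ (Matrix.trace (E i * ρ yp)).re :=
        (hprob yp i).1 (by rw [hyp]; exact decide_eq_true h)
      have hxn : (Matrix.trace (E i * ρ yn)).re ≤ 1 - p :=
        (hprob yn i).2 (by rw [hyn]; exact decide_eq_false (asymm h))
      have hlt : (Matrix.trace (E i * ρ yn)).re < (Matrix.trace (E i * ρ yp)).re := by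
        linarith
      exact ⟨(mul_lt_mul_of_pos_right hlt h).le, fun _ => mul_lt_mul_of_pos_right hlt h⟩
  have hsum : ∑ i, (Matrix.trace (E i * ρ yn)).re * r i
      < ∑ i, (Matrix.trace (E i * ρ yp)).re * r i := by
    apply Finset.sum_lt_sum (fun i _ => (key i).1)
    exact ⟨j, Finset.mem_univ j, (key j).2 hrj⟩
  exact absurd (hconst yn yp) (ne_of_lt hsum)
end
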